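/- For a natural number k ≥ 1, define p_k(t) = (t^k - 1)/(t - 1) = 1 + t + ... + t^{k-1} ∈ ℤ[t]. If k < ℓ are coprime natural numbers, then p_k(t) and p_ℓ(t) generate the unit ideal in the Laurent polynomial ring ℤ[t, t^{-1}]; that is, there exist Laurent polynomials f, g ∈ ℤ[t, t^{-1}] with f·p_k + g·p_ℓ = 1. -/
import Mathlib


open LaurentPolynomial

/-- `p k = 1 + t + ... + t^(k-1)` in the Laurent polynomial ring ℤ[t,t⁻¹]. -/
noncomputable def pLaurent (k : ℕ) : LaurentPolynomial ℤ :=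
  ∑ i ∈ Finset.range k, T (i : ℤ)

lemma pLaurent_add (a b : ℕ) :
    pLaurent (a + b) = pLaurent a + T (a : ℤ) * pLaurent b := by
  induction b with
  | zero => simp [pLaurent]
  | succ n ih =>
    have : a + (n + 1) = (a + n) + 1 := by omega
    rw [this]
    unfold pLaurent at *
    rw [Finset.sum_range_succ, ih, Finset.sum_range_succ, mul_add, ← T_add]
    push_cast
    ring

lemma pLaurent_one : pLaurent 1 = 1 := by
  simp [pLaurent]

lemma pLaurent_aux : ∀ n k l : ℕ, k + l ≤ n → Nat.gcd k l = 1 →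
    ∃ f g : LaurentPolynomial ℤ, f * pLaurent k + g * pLaurent l = 1 := by
  intro n
  induction n with
  | zero =>
    intro k l h hg
    have hk : k = 0 := by omega
    have hl : l = 0 := by omega
    simp [hk, hl] at hg
  | succ n ih =>
    intro k l h hg
    rcases Nat.eq_zero_or_pos k with hk | hk
    · subst hk
      simp only [Nat.gcd_zero_left] at hg
      subst hg
      exact ⟨0, 1, by simp [pLaurent_one]⟩
    rcases Nat.eq_zero_or_pos l with hl | hl
    · subst hl
      simp only [Nat.gcd_zero_right] at hg
      subst hg
      exact ⟨1, 0, by simp [pLaurent_one]⟩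
    rcases le_or_gt k l with hkl | hkl
    · have hg' : Nat.gcd k (l - k) = 1 := by
        rw [Nat.gcd_sub_self_right hkl]; exact hg
      obtain ⟨f, g, hfg⟩ := ih k (l - k) (by omega) hg'
      have hid : pLaurent l = pLaurent (l - k) + T ((l - k : ℕ) : ℤ) * pLaurent k := by
        have := pLaurent_add (l - k) k
        rwa [Nat.sub_add_cancel hkl] at this
      exact ⟨f - g * T ((l - k : ℕ) : ℤ), g, by linear_combination hfg + g * hid⟩
    · have hg' : Nat.gcd (k - l) l = 1 := by
        rw [Nat.gcd_sub_self_left hkl.le]; exact hg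
      obtain ⟨f, g, hfg⟩ := ih (k - l) l (by omega) hg'
      have hid : pLaurent k = pLaurent (k - l) + T ((k - l : ℕ) : ℤ) * pLaurent l := by
        have := pLaurent_add (k - l) l
        rwa [Nat.sub_add_cancel hkl.le] at this
      exact ⟨f, g - f * T ((k - l : ℕ) : ℤ), by linear_combination hfg + f * hid⟩

theorem pk_pl_coprime_in_laurent (k ℓ : ℕ) (hk : 1 ≤ k) (hkl : k < ℓ)
    (hcop : Nat.Coprime k ℓ) :
    ∃ f g : LaurentPolynomial ℤ, f * pLaurent k + g * pLaurent ℓ = 1 := by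
  exact pLaurent_aux (k + ℓ) k ℓ le_rfl hcop
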